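/- Let (E,ℰ) be a measurable space and let (P_μ)_{μ∈𝒫(E)} be a nonlinear Markov chain satisfying: (B1) sup_{μ,ν∈𝒫(E), x,y∈E} ‖P_μ(x,·) − P_ν(y,·)‖_TV ≤ 2(1−α) for some 0 < α < 1, and (B2) ‖P_μ(x,·) − P_ν(x,·)‖_TV ≤ λ‖μ − ν‖_TV for all x ∈ E and μ,ν ∈ 𝒫(E), with λ ∈ [0,α]. Then the chain has a unique invariant measure π, and for every initial distribution μ₀: if λ < α then ‖μ_n − π‖_TV ≤ 2(1−(α−λ))^n for all n ∈ ℤ₊, while if λ = α then ‖μ_n − π‖_TV ≤ 2/(λn) for all n ≥ 1. -/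

import Mathlib

/-!
Split `μ` and `ν` into a common part of mass `1 - D / 2`, `D = tvDist μ ν`, and two remainders
of mass `D / 2`. Coupling the common part with itself (where (B2) applies) and the remainders
with each other (where (B1) applies) gives the one-step bound
`tvDist (μ P_μ) (ν P_ν) ≤ (1 - α + λ) D - (λ / 2) D²`. For `λ < α` this is a contraction with
factor `1 - (α - λ)`. In general, since `D ≤ 2`, it gives `D' ≤ D - (α / 2) D²`, hence
`n α D_n ≤ 2` along any two trajectories. The step map therefore has uniformly converging
iterates, and completeness of the probability measures under the total variation distance
yields the unique invariant measure.
-/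

open MeasureTheory ProbabilityTheory

/-- Total variation distance `‖μ − ν‖_TV = 2 sup_{A ∈ ℰ} |μ(A) − ν(A)|`. -/
noncomputable def tvDist {E : Type*} [MeasurableSpace E] (μ ν : Measure E) : ℝ :=
  2 * ⨆ A : {s : Set E // MeasurableSet s}, |(μ A).toReal - (ν A).toReal|

/-- One step of the nonlinear chain: `μ ↦ μ P_μ`, `(νP_μ)(B) = ∫ P_μ(x,B) ν(dx)`. -/
noncomputable def stepMeasure {E : Type*} [MeasurableSpace E]
    (P : Measure E → Kernel E E) (μ : Measure E) : Measure E :=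
  μ.bind (fun x => P μ x)

/-- Two-step transition kernel `Q_μ(x,B) = ∫ P_μ(x,dy) P_{μP_μ}(y,B)`. -/
noncomputable def twoStepKernel {E : Type*} [MeasurableSpace E]
    (P : Measure E → Kernel E E) (μ : Measure E) (x : E) : Measure E :=
  (P μ x).bind (fun y => P (stepMeasure P μ) y)

/-- Marginal distributions `μ_{n+1} = μ_n P_{μ_n}` of the nonlinear Markov chain. -/
noncomputable def marginal {E : Type*} [MeasurableSpace E]
    (P : Measure E → Kernel E E) (μ0 : Measure E) : ℕ → Measure E
  | 0 => μ0
  | n + 1 => stepMeasure P (marginal P μ0 n)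

open Filter Set Topology

section TotalVariation

variable {E : Type*} [MeasurableSpace E]

instance : Nonempty {s : Set E // MeasurableSet s} := ⟨⟨∅, .empty⟩⟩

lemma tvDist_eq_two_mul_iSup (μ ν : Measure E) :
    tvDist μ ν = 2 * ⨆ A : {s : Set E // MeasurableSet s}, |μ.real A - ν.real A| :=
  rfl

lemma tvDist_comm (μ ν : Measure E) : tvDist μ ν = tvDist ν μ := by
  simp only [tvDist, abs_sub_comm]

lemma tvDist_le_of_forall {μ ν : Measure E} {c : ℝ}
    (h : ∀ A, MeasurableSet A → |μ.real A - ν.real A| ≤ c) : tvDist μ ν ≤ 2 * c := by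
  rw [tvDist_eq_two_mul_iSup]
  gcongr
  exact ciSup_le fun A => h A A.2

variable (μ ν ρ : Measure E) [IsProbabilityMeasure μ] [IsProbabilityMeasure ν]

lemma abs_measureReal_sub_le_one (A : Set E) : |μ.real A - ν.real A| ≤ 1 :=
  abs_sub_le_of_nonneg_of_le measureReal_nonneg measureReal_le_one
    measureReal_nonneg measureReal_le_one

lemma abs_measureReal_sub_le_tvDist {A : Set E} (hA : MeasurableSet A) :
    |μ.real A - ν.real A| ≤ tvDist μ ν / 2 := by
  have := le_ciSup (⟨1, by rintro _ ⟨B, rfl⟩; exact abs_measureReal_sub_le_one μ ν B⟩ :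
    BddAbove (Set.range fun B : {s : Set E // MeasurableSet s} => |μ.real B - ν.real B|))
    ⟨A, hA⟩
  rw [tvDist_eq_two_mul_iSup]
  linarith

lemma tvDist_nonneg : 0 ≤ tvDist μ ν := by
  linarith [abs_measureReal_sub_le_tvDist μ ν .empty, abs_nonneg (μ.real ∅ - ν.real ∅)]

lemma tvDist_le_two : tvDist μ ν ≤ 2 := by
  simpa using tvDist_le_of_forall fun A _ => abs_measureReal_sub_le_one μ ν A

lemma tvDist_self : tvDist μ μ = 0 :=
  le_antisymm (by simpa using tvDist_le_of_forall (μ := μ) (ν := μ) (c := 0) (by simp))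
    (tvDist_nonneg μ μ)

lemma tvDist_triangle [IsProbabilityMeasure ρ] : tvDist μ ρ ≤ tvDist μ ν + tvDist ν ρ := by
  have := tvDist_le_of_forall (μ := μ) (ν := ρ) (c := (tvDist μ ν + tvDist ν ρ) / 2)
    fun A hA => by
      linarith [abs_sub_le (μ.real A) (ν.real A) (ρ.real A),
        abs_measureReal_sub_le_tvDist μ ν hA, abs_measureReal_sub_le_tvDist ν ρ hA]
  linarith

variable {μ ν} in
lemma eq_of_tvDist_eq_zero (h : tvDist μ ν = 0) : μ = ν := by
  refine Measure.ext fun A hA => (ENNReal.toReal_eq_toReal_iff' (measure_ne_top μ A)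
    (measure_ne_top ν A)).mp ?_
  have := abs_measureReal_sub_le_tvDist μ ν hA
  rw [h, zero_div, abs_nonpos_iff, sub_eq_zero] at this
  exact this

end TotalVariation

section CommonPart

variable {E : Type*} [MeasurableSpace E]

lemma tvDist_le_of_add_eq_add {μ ν ρ σ γ : Measure E} [IsFiniteMeasure ρ] [IsFiniteMeasure σ]
    [IsFiniteMeasure γ] (hμ : ρ + γ = μ) (hν : σ + γ = ν) (hρσ : ρ.real univ = σ.real univ) :
    tvDist μ ν ≤ 2 * ρ.real univ := by
  refine tvDist_le_of_forall fun A _ => ?_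
  rw [← hμ, ← hν, measureReal_add_apply, measureReal_add_apply, add_sub_add_right_eq_sub]
  exact abs_sub_le_of_nonneg_of_le measureReal_nonneg (measureReal_mono (subset_univ A))
    measureReal_nonneg (hρσ ▸ measureReal_mono (subset_univ A))

lemma exists_add_eq_add_eq (μ ν : Measure E) [IsProbabilityMeasure μ] [IsProbabilityMeasure ν] :
    ∃ ρ σ γ : Measure E, IsFiniteMeasure ρ ∧ IsFiniteMeasure σ ∧ IsFiniteMeasure γ ∧
      ρ + γ = μ ∧ σ + γ = ν ∧ ρ.real univ = tvDist μ ν / 2 ∧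
      σ.real univ = tvDist μ ν / 2 ∧ γ.real univ = 1 - tvDist μ ν / 2 := by
  obtain ⟨S, hS, hle, hge⟩ := exists_isHahnDecomposition ν μ
  set γ := ν.restrict S + μ.restrict Sᶜ
  have hμ : (μ.restrict S - ν.restrict S) + γ = μ := by
    rw [← add_assoc, Measure.sub_add_cancel_of_le hle, Measure.restrict_add_restrict_compl hS]
  have hν : (ν.restrict Sᶜ - μ.restrict Sᶜ) + γ = ν := by
    rw [add_left_comm, Measure.sub_add_cancel_of_le hge, Measure.restrict_add_restrict_compl hS]
  have hmass : ∀ {κ ρ : Measure E} [IsProbabilityMeasure κ] [IsFiniteMeasure ρ],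
      ρ + γ = κ → ρ.real univ = 1 - γ.real univ := fun {κ _} _ _ h => by
    rw [← probReal_univ (μ := κ), ← h, measureReal_add_apply]
    ring
  have hγ : γ.real univ = ν.real S + μ.real Sᶜ := by
    rw [measureReal_add_apply, measureReal_restrict_apply_univ, measureReal_restrict_apply_univ]
  have hD : tvDist μ ν = 2 * (1 - γ.real univ) := by
    refine le_antisymm ((hmass hμ).symm ▸ tvDist_le_of_add_eq_add hμ hν
      ((hmass hμ).trans (hmass hν).symm)) ?_
    have := (le_abs_self _).trans (abs_measureReal_sub_le_tvDist μ ν hS)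
    rw [hγ, probReal_compl_eq_one_sub hS]
    linarith
  exact ⟨_, _, γ, inferInstance, inferInstance, inferInstance, hμ, hν,
    by rw [hmass hμ, hD]; ring, by rw [hmass hν, hD]; ring, by rw [hD]; ring⟩

end CommonPart

section CouplingBound

variable {E : Type*} [MeasurableSpace E]

lemma integral_sub_integral_le_of_forall_sub_le {ρ σ : Measure E} [IsFiniteMeasure ρ]
    [IsFiniteMeasure σ] {f g : E → ℝ} (hf : Integrable f ρ) (hg : Integrable g σ) {β : ℝ}
    (hmass : ρ.real univ = σ.real univ) (hfg : ∀ x y, f x - g y ≤ β) :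
    ∫ x, f x ∂ρ - ∫ y, g y ∂σ ≤ β * σ.real univ := by
  rcases measureReal_nonneg.eq_or_lt with ht | ht
  · have hσ : σ = 0 := Measure.measure_univ_eq_zero.mp ((measureReal_eq_zero_iff).mp ht.symm)
    have hρ : ρ = 0 :=
      Measure.measure_univ_eq_zero.mp ((measureReal_eq_zero_iff).mp (hmass.trans ht.symm))
    simp [hσ, hρ]
  have hpoint : ∀ y, ∫ x, f x ∂ρ ≤ (g y + β) * σ.real univ := fun y => by
    simpa [hmass, mul_comm] using
      integral_mono hf (integrable_const (g y + β)) fun x => by linarith [hfg x y]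
  have hint : (∫ x, f x ∂ρ) * σ.real univ ≤ (∫ y, g y ∂σ + β * σ.real univ) * σ.real univ := by
    calc (∫ x, f x ∂ρ) * σ.real univ = ∫ _, ∫ x, f x ∂ρ ∂σ := by simp [mul_comm]
      _ ≤ ∫ y, (g y + β) * σ.real univ ∂σ :=
        integral_mono (integrable_const _) ((hg.add (integrable_const β)).mul_const _) hpoint
      _ = (∫ y, g y ∂σ + β * σ.real univ) * σ.real univ := by
        rw [integral_mul_const, integral_add hg (integrable_const β)]
        simp [mul_comm]
  linarith [le_of_mul_le_mul_right hint ht]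

/-- The coupling estimate: pair the common parts of `μ` and `ν`, where `f` and `g` differ by at
most `δ`, and pair the remaining parts of mass `tvDist μ ν / 2` arbitrarily. -/
lemma abs_integral_sub_integral_le (μ ν : Measure E) [IsProbabilityMeasure μ]
    [IsProbabilityMeasure ν] {f g : E → ℝ} (hf : Integrable f μ) (hg : Integrable g ν)
    {β δ : ℝ} (hfar : ∀ x y, |f x - g y| ≤ β) (hnear : ∀ x, |f x - g x| ≤ δ) :
    |∫ x, f x ∂μ - ∫ x, g x ∂ν| ≤ tvDist μ ν / 2 * β + (1 - tvDist μ ν / 2) * δ := by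
  obtain ⟨ρ, σ, γ, _, _, _, hμ, hν, hρ, hσ, hγ⟩ := exists_add_eq_add_eq μ ν
  have hfρ : Integrable f ρ := hf.mono_measure (hμ ▸ Measure.le_add_right le_rfl)
  have hfγ : Integrable f γ := hf.mono_measure (hμ ▸ Measure.le_add_left le_rfl)
  have hgσ : Integrable g σ := hg.mono_measure (hν ▸ Measure.le_add_right le_rfl)
  have hgγ : Integrable g γ := hg.mono_measure (hν ▸ Measure.le_add_left le_rfl)
  have hcommon : |∫ x, f x ∂γ - ∫ x, g x ∂γ| ≤ δ * γ.real univ := by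
    rw [← integral_sub hfγ hgγ]
    exact norm_integral_le_of_norm_le_const (f := fun x => f x - g x)
      (ae_of_all _ fun x => by simpa using hnear x)
  have hfg := integral_sub_integral_le_of_forall_sub_le hfρ hgσ (β := β) (hρ.trans hσ.symm)
    fun x y => by linarith [le_abs_self (f x - g y), hfar x y]
  have hgf := integral_sub_integral_le_of_forall_sub_le hgσ hfρ (β := β) (hσ.trans hρ.symm)
    fun x y => by linarith [neg_le_abs (f y - g x), hfar y x]
  have hfμ : ∫ x, f x ∂μ = ∫ x, f x ∂ρ + ∫ x, f x ∂γ := by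
    rw [← hμ, integral_add_measure hfρ hfγ]
  have hgν : ∫ x, g x ∂ν = ∫ x, g x ∂σ + ∫ x, g x ∂γ := by
    rw [← hν, integral_add_measure hgσ hgγ]
  rw [hγ, abs_le] at hcommon
  rw [hσ] at hfg
  rw [hρ] at hgf
  rw [hfμ, hgν, abs_le]
  constructor <;> linarith [hcommon.1, hcommon.2]

lemma measureReal_bind_apply {E' : Type*} [MeasurableSpace E'] (μ : Measure E)
    (κ : Kernel E E') [IsFiniteKernel κ] {A : Set E'} (hA : MeasurableSet A) :
    (μ.bind κ).real A = ∫ x, (κ x).real A ∂μ := by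
  rw [measureReal_def, Measure.bind_apply hA κ.measurable.aemeasurable,
    ← integral_toReal (κ.measurable_coe hA).aemeasurable
      (ae_of_all _ fun x => measure_lt_top _ _)]
  rfl

lemma tvDist_bind_le {E' : Type*} [MeasurableSpace E'] (μ ν : Measure E)
    [IsProbabilityMeasure μ] [IsProbabilityMeasure ν] (κ η : Kernel E E') [IsMarkovKernel κ]
    [IsMarkovKernel η] {β δ : ℝ} (hfar : ∀ x y, tvDist (κ x) (η y) ≤ 2 * β)
    (hnear : ∀ x, tvDist (κ x) (η x) ≤ 2 * δ) :
    tvDist (μ.bind κ) (ν.bind η) ≤ tvDist μ ν * β + (2 - tvDist μ ν) * δ := by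
  have hint : ∀ (ξ : Kernel E E') [IsMarkovKernel ξ] (m : Measure E) [IsFiniteMeasure m]
      {A : Set E'}, MeasurableSet A → Integrable (fun x => (ξ x).real A) m :=
    fun ξ _ m _ A hA => .of_bound (ξ.measurable_coe hA).ennreal_toReal.aestronglyMeasurable 1
      (ae_of_all _ fun x => by simp [abs_of_nonneg, measureReal_le_one])
  have : tvDist (μ.bind κ) (ν.bind η) ≤
      2 * (tvDist μ ν / 2 * β + (1 - tvDist μ ν / 2) * δ) := tvDist_le_of_forall fun A hA => by
    rw [measureReal_bind_apply μ κ hA, measureReal_bind_apply ν η hA]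
    refine abs_integral_sub_integral_le μ ν (hint κ μ hA) (hint η ν hA)
      (fun x y => ?_) (fun x => ?_)
    · linarith [abs_measureReal_sub_le_tvDist (κ x) (η y) hA, hfar x y]
    · linarith [abs_measureReal_sub_le_tvDist (κ x) (η x) hA, hnear x]
  linarith

end CouplingBound

section UniformLimit

variable {E : Type*} [MeasurableSpace E]

open ENNReal

lemma isSetRing_measurableSet : IsSetRing {A : Set E | MeasurableSet A} :=
  ⟨.empty, fun _ _ => .union, fun _ _ => .diff⟩

lemma exists_measureReal_eq_of_tendstoUniformlyOn (u : ℕ → Measure E)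
    [∀ n, IsProbabilityMeasure (u n)] {L : Set E → ℝ}
    (hL : TendstoUniformlyOn (fun n A => (u n).real A) L atTop {A | MeasurableSet A}) :
    ∃ π : Measure E, IsProbabilityMeasure π ∧ ∀ A, MeasurableSet A → π.real A = L A := by
  have hlim : ∀ {A}, MeasurableSet A → Tendsto (fun n => (u n).real A) atTop (𝓝 (L A)) :=
    fun hA => hL.tendsto_at hA
  have hnonneg : ∀ {A}, MeasurableSet A → 0 ≤ L A := fun hA =>
    ge_of_tendsto' (hlim hA) fun _ => measureReal_nonneg
  have hempty : L ∅ = 0 := tendsto_nhds_unique (hlim .empty) (by simp)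
  have huniv : L univ = 1 := tendsto_nhds_unique (hlim .univ) (by simp)
  have hunion : ∀ {A B}, MeasurableSet A → MeasurableSet B → Disjoint A B →
      L (A ∪ B) = L A + L B := fun hA hB hAB =>
    tendsto_nhds_unique (hlim (hA.union hB))
      (((hlim hA).add (hlim hB)).congr fun n => (measureReal_union (μ := u n) hAB hB).symm)
  -- Uniformity reduces continuity at `∅` to that of the single measure `u N`.
  have hcont : ∀ ⦃s : ℕ → Set E⦄, (∀ k, MeasurableSet (s k)) → Antitone s →
      ⋂ k, s k = ∅ → Tendsto (fun k => L (s k)) atTop (𝓝 0) := by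
    intro s hs hanti hs0
    rw [Metric.tendsto_atTop]
    intro ε hε
    obtain ⟨N, hN⟩ := (Metric.tendstoUniformlyOn_iff.mp hL (ε / 2) (half_pos hε)).exists
    have huN : Tendsto (fun k => (u N).real (s k)) atTop (𝓝 0) := by
      have := tendsto_measure_iInter_atTop (fun k => (hs k).nullMeasurableSet) hanti
        ⟨0, measure_ne_top (u N) _⟩
      rw [hs0, measure_empty] at this
      exact (ENNReal.tendsto_toReal zero_ne_top).comp this
    obtain ⟨K, hK⟩ := Metric.tendsto_atTop.mp huN (ε / 2) (half_pos hε)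
    refine ⟨K, fun k hk => ?_⟩
    have h1 := hN (s k) (hs k)
    have h2 := hK k hk
    rw [Real.dist_eq, abs_lt] at h1
    rw [Real.dist_eq, sub_zero, abs_of_nonneg measureReal_nonneg] at h2
    rw [Real.dist_eq, sub_zero, abs_of_nonneg (hnonneg (hs k))]
    linarith
  let m : AddContent ℝ≥0∞ {A | MeasurableSet A} :=
    isSetRing_measurableSet.addContent_of_union (fun A => ENNReal.ofReal (L A))
      (by simp [hempty]) fun hA hB hAB => by
        rw [hunion hA hB hAB, ENNReal.ofReal_add (hnonneg hA) (hnonneg hB)]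
  refine ⟨Measure.ofMeasurable (fun A _ => m A) (addContent_empty (m := m)) fun f hf hd =>
    addContent_iUnion_eq_sum_of_tendsto_zero isSetRing_measurableSet m
      (fun _ _ => ofReal_ne_top)
      (fun s hs hanti hs0 => by
        have := ENNReal.tendsto_ofReal (hcont hs hanti hs0)
        rwa [ofReal_zero] at this)
      hf (.iUnion hf) hd, ⟨?_⟩, fun A hA => ?_⟩
  · rw [Measure.ofMeasurable_apply _ .univ]
    show ENNReal.ofReal (L univ) = 1
    rw [huniv, ofReal_one]
  · rw [measureReal_def, Measure.ofMeasurable_apply _ hA]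
    exact toReal_ofReal (hnonneg hA)

end UniformLimit

-- Mathlib's `ProbabilityMeasure` carries the weak topology, hence a separate type.
@[ext]
structure TVProbabilityMeasure (E : Type*) [MeasurableSpace E] where
  toMeasure : Measure E
  [isProbabilityMeasure : IsProbabilityMeasure toMeasure]

attribute [instance] TVProbabilityMeasure.isProbabilityMeasure

namespace TVProbabilityMeasure

variable {E : Type*} [MeasurableSpace E]

noncomputable instance : MetricSpace (TVProbabilityMeasure E) where
  dist μ ν := tvDist μ.toMeasure ν.toMeasure
  dist_self μ := tvDist_self _
  dist_comm μ ν := tvDist_comm _ _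
  dist_triangle μ ν ρ := tvDist_triangle _ _ _
  eq_of_dist_eq_zero h := TVProbabilityMeasure.ext (eq_of_tvDist_eq_zero h)

instance [Nonempty E] : Nonempty (TVProbabilityMeasure E) :=
  ⟨⟨Measure.dirac (Classical.arbitrary E)⟩⟩

lemma dist_eq (μ ν : TVProbabilityMeasure E) : dist μ ν = tvDist μ.toMeasure ν.toMeasure :=
  rfl

instance : CompleteSpace (TVProbabilityMeasure E) := by
  refine Metric.complete_of_cauchySeq_tendsto fun u hu => ?_
  have hunif : UniformCauchySeqOn (fun n A => (u n).toMeasure.real A) atTop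
      {A | MeasurableSet A} := by
    refine Metric.uniformCauchySeqOn_iff.mpr fun ε hε => ?_
    obtain ⟨N, hN⟩ := Metric.cauchySeq_iff.mp hu ε hε
    refine ⟨N, fun m hm n hn A hA => ?_⟩
    have := abs_measureReal_sub_le_tvDist (u m).toMeasure (u n).toMeasure hA
    have := hN m hm n hn
    rw [dist_eq] at this
    rw [Real.dist_eq]
    linarith [tvDist_nonneg (u m).toMeasure (u n).toMeasure]
  have hconv := hunif.tendstoUniformlyOn_of_tendsto
    (f := fun A => limUnder atTop fun n => (u n).toMeasure.real A) fun A hA =>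
    (hunif.cauchySeq hA).tendsto_limUnder
  obtain ⟨π, _, hπ⟩ := exists_measureReal_eq_of_tendstoUniformlyOn _ hconv
  refine ⟨⟨π⟩, Metric.tendsto_atTop.mpr fun ε hε => ?_⟩
  obtain ⟨N, hN⟩ := eventually_atTop.mp
    (Metric.tendstoUniformlyOn_iff.mp hconv (ε / 4) (by positivity))
  refine ⟨N, fun n hn => ?_⟩
  have : tvDist (u n).toMeasure π ≤ 2 * (ε / 4) := tvDist_le_of_forall fun A hA => by
    rw [hπ A hA, ← Real.dist_eq, dist_comm]
    exact (hN n hn A hA).le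
  rw [dist_eq]
  linarith

end TVProbabilityMeasure

lemma exists_unique_isFixedPt_of_dist_iterate_le {X : Type*} [MetricSpace X] [CompleteSpace X]
    [Nonempty X] {F : X → X} (hF : Continuous F) {r : ℕ → ℝ} (hr : Tendsto r atTop (𝓝 0))
    (hFr : ∀ᶠ n in atTop, ∀ x y, dist (F^[n] x) (F^[n] y) ≤ r n) :
    ∃! p, Function.IsFixedPt F p := by
  obtain ⟨x⟩ := ‹Nonempty X›
  have hcauchy : CauchySeq fun n => F^[n] x := by
    refine Metric.cauchySeq_iff'.mpr fun ε hε => ?_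
    obtain ⟨N, hN, hrN⟩ := (hFr.and (hr.eventually (gt_mem_nhds hε))).exists
    refine ⟨N, fun n hn => ?_⟩
    obtain ⟨k, rfl⟩ := Nat.exists_eq_add_of_le hn
    rw [Function.iterate_add_apply]
    exact (hN _ _).trans_lt hrN
  obtain ⟨p, hp⟩ := cauchySeq_tendsto_of_complete hcauchy
  have hpF := isFixedPt_of_tendsto_iterate hp hF.continuousAt
  refine ⟨p, hpF, fun q hq => ?_⟩
  have hqp : ∀ᶠ n in atTop, dist q p ≤ r n := hFr.mono fun n h => by
    simpa only [(hq.iterate n).eq, (hpF.iterate n).eq] using h q p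
  exact dist_le_zero.mp (ge_of_tendsto hr hqp)

lemma nat_mul_le_two_of_le_sub_sq_div_two {x : ℕ → ℝ} (hx : ∀ n, x (n + 1) ≤ x n - x n ^ 2 / 2)
    (n : ℕ) : n * x n ≤ 2 := by
  have hsucc : ∀ n : ℕ, (n + 1 : ℝ) * x (n + 1) ≤ 2 := by
    intro n
    induction n with
    | zero =>
      simp only [Nat.cast_zero, zero_add, one_mul]
      nlinarith [hx 0, sq_nonneg (x 0 - 1)]
    | succ n ih =>
      push_cast at ih ⊢
      have hy := hx (n + 1)
      have hy2 : x (n + 1) ≤ 2 := by nlinarith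
      nlinarith [mul_le_mul_of_nonneg_left hy (by positivity : (0 : ℝ) ≤ n + 1 + 1),
        mul_nonneg (sub_nonneg.mpr ih) (sub_nonneg.mpr hy2), sq_nonneg (x (n + 1))]
  cases n with
  | zero => simp
  | succ n => exact_mod_cast hsucc n

section NonlinearChain

variable {E : Type*} [MeasurableSpace E] (P : Measure E → Kernel E E)

structure ButkovskyConditions (α lam : ℝ) : Prop where
  b1 : ∀ μ ν : Measure E, IsProbabilityMeasure μ → IsProbabilityMeasure ν →
    ∀ x y, tvDist (P μ x) (P ν y) ≤ 2 * (1 - α)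
  b2 : ∀ μ ν : Measure E, IsProbabilityMeasure μ → IsProbabilityMeasure ν →
    ∀ x, tvDist (P μ x) (P ν x) ≤ lam * tvDist μ ν

@[simp]
lemma marginal_succ (μ0 : Measure E) (n : ℕ) :
    marginal P μ0 (n + 1) = stepMeasure P (marginal P μ0 n) :=
  rfl

lemma marginal_eq_self {π : Measure E} (hπ : stepMeasure P π = π) (n : ℕ) :
    marginal P π n = π := by
  induction n with
  | zero => rfl
  | succ n ih => exact (congrArg (stepMeasure P) ih).trans hπ

variable [∀ μ, IsMarkovKernel (P μ)]

instance isProbabilityMeasure_stepMeasure (μ : Measure E) [IsProbabilityMeasure μ] :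
    IsProbabilityMeasure (stepMeasure P μ) :=
  isProbabilityMeasure_bind (P μ).measurable.aemeasurable (ae_of_all _ inferInstance)

instance isProbabilityMeasure_marginal (μ0 : Measure E) [IsProbabilityMeasure μ0] (n : ℕ) :
    IsProbabilityMeasure (marginal P μ0 n) := by
  induction n with
  | zero => assumption
  | succ n ih => exact isProbabilityMeasure_stepMeasure P _

variable {P} {α lam : ℝ}

lemma tvDist_stepMeasure_le (h : ButkovskyConditions P α lam) (μ ν : Measure E)
    [IsProbabilityMeasure μ] [IsProbabilityMeasure ν] :
    tvDist (stepMeasure P μ) (stepMeasure P ν) ≤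
      (1 - α + lam) * tvDist μ ν - lam / 2 * tvDist μ ν ^ 2 := by
  have := tvDist_bind_le μ ν (P μ) (P ν) (δ := lam * tvDist μ ν / 2) (h.b1 μ ν ‹_› ‹_›)
    fun x => by linarith [h.b2 μ ν ‹_› ‹_› x]
  exact this.trans_eq (by ring)

lemma tvDist_marginal_le_geometric (h : ButkovskyConditions P α lam) (hlam0 : 0 ≤ lam)
    (hαlam : α - lam ≤ 1) (μ0 ν0 : Measure E) [IsProbabilityMeasure μ0]
    [IsProbabilityMeasure ν0] (n : ℕ) :
    tvDist (marginal P μ0 n) (marginal P ν0 n) ≤ 2 * (1 - (α - lam)) ^ n := by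
  induction n with
  | zero => simpa [marginal] using tvDist_le_two μ0 ν0
  | succ n ih =>
    have hstep := tvDist_stepMeasure_le h (marginal P μ0 n) (marginal P ν0 n)
    rw [← marginal_succ, ← marginal_succ] at hstep
    have hq : 0 ≤ 1 - (α - lam) := by linarith
    calc tvDist (marginal P μ0 (n + 1)) (marginal P ν0 (n + 1))
        ≤ (1 - (α - lam)) * tvDist (marginal P μ0 n) (marginal P ν0 n) := by
          nlinarith [sq_nonneg (tvDist (marginal P μ0 n) (marginal P ν0 n))]
      _ ≤ (1 - (α - lam)) * (2 * (1 - (α - lam)) ^ n) := by gcongr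
      _ = 2 * (1 - (α - lam)) ^ (n + 1) := by ring

/-- Since `tvDist ≤ 2`, the defect `(α - lam) D` is at least `(α - lam) D² / 2`. -/
lemma tvDist_stepMeasure_le_sub_sq (h : ButkovskyConditions P α lam) (hlamα : lam ≤ α)
    (μ ν : Measure E) [IsProbabilityMeasure μ] [IsProbabilityMeasure ν] :
    tvDist (stepMeasure P μ) (stepMeasure P ν) ≤ tvDist μ ν - α / 2 * tvDist μ ν ^ 2 := by
  have := tvDist_stepMeasure_le h μ ν
  nlinarith [mul_nonneg (mul_nonneg (sub_nonneg.mpr hlamα) (tvDist_nonneg μ ν))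
    (sub_nonneg.mpr (tvDist_le_two μ ν))]

lemma nat_mul_tvDist_marginal_le (h : ButkovskyConditions P α lam) (hα0 : 0 ≤ α)
    (hlamα : lam ≤ α) (μ0 ν0 : Measure E) [IsProbabilityMeasure μ0]
    [IsProbabilityMeasure ν0] (n : ℕ) :
    n * (α * tvDist (marginal P μ0 n) (marginal P ν0 n)) ≤ 2 := by
  refine nat_mul_le_two_of_le_sub_sq_div_two
    (x := fun n => α * tvDist (marginal P μ0 n) (marginal P ν0 n)) (fun n => ?_) n
  have := mul_le_mul_of_nonneg_left
    (tvDist_stepMeasure_le_sub_sq h hlamα (marginal P μ0 n) (marginal P ν0 n)) hα0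
  simp only [marginal_succ]
  linarith

lemma exists_unique_stepMeasure_eq [Nonempty E] (h : ButkovskyConditions P α lam)
    (hα0 : 0 < α) (hlamα : lam ≤ α) :
    ∃ π : Measure E, IsProbabilityMeasure π ∧ stepMeasure P π = π ∧
      ∀ π' : Measure E, IsProbabilityMeasure π' → stepMeasure P π' = π' → π' = π := by
  let F (μ : TVProbabilityMeasure E) : TVProbabilityMeasure E := ⟨stepMeasure P μ.toMeasure⟩
  have hFn (n : ℕ) (μ : TVProbabilityMeasure E) :
      (F^[n] μ).toMeasure = marginal P μ.toMeasure n := by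
    induction n with
    | zero => rfl
    | succ n ih => rw [Function.iterate_succ_apply', marginal_succ, ← ih]
  have hF : LipschitzWith 1 F := LipschitzWith.of_dist_le_mul fun μ ν => by
    have := tvDist_stepMeasure_le_sub_sq h hlamα μ.toMeasure ν.toMeasure
    simp only [TVProbabilityMeasure.dist_eq, NNReal.coe_one, one_mul]
    change tvDist (stepMeasure P _) (stepMeasure P _) ≤ _
    nlinarith [sq_nonneg (tvDist μ.toMeasure ν.toMeasure)]
  have hr : Tendsto (fun n : ℕ => 2 / (α * n)) atTop (𝓝 0) := by
    simpa only [div_div] using tendsto_const_div_atTop_nhds_zero_nat (2 / α)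
  obtain ⟨π, hπ, huniq⟩ := exists_unique_isFixedPt_of_dist_iterate_le hF.continuous hr <|
    (eventually_ge_atTop 1).mono fun n hn μ ν => by
      rw [TVProbabilityMeasure.dist_eq, hFn, hFn, le_div_iff₀ (by positivity)]
      linarith [nat_mul_tvDist_marginal_le h hα0.le hlamα μ.toMeasure ν.toMeasure n]
  exact ⟨π.toMeasure, inferInstance, congrArg TVProbabilityMeasure.toMeasure hπ,
    fun π' _ hπ' => congrArg TVProbabilityMeasure.toMeasure (huniq ⟨π'⟩ (by ext1; exact hπ'))⟩

end NonlinearChain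

/-- Butkovsky's one-step result: under
(B1) `sup ‖P_μ(x,·) − P_ν(y,·)‖_TV ≤ 2(1−α)` with `0 < α < 1` and
(B2) `‖P_μ(x,·) − P_ν(x,·)‖_TV ≤ λ‖μ − ν‖_TV` with `λ ∈ [0,α]`, the chain has a unique
invariant measure `π`; if `λ < α` then `‖μ_n − π‖_TV ≤ 2(1−(α−λ))^n`, and if `λ = α`
then `‖μ_n − π‖_TV ≤ 2/(λn)` for `n ≥ 1`. -/
theorem butkovsky_one_step
    {E : Type*} [MeasurableSpace E] [Nonempty E]
    (P : Measure E → Kernel E E) (hP : ∀ μ, IsMarkovKernel (P μ))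
    (α lam : ℝ) (hα0 : 0 < α) (hα1 : α < 1) (hlam0 : 0 ≤ lam) (hlamα : lam ≤ α)
    (B1 : ∀ (μ ν : Measure E), IsProbabilityMeasure μ → IsProbabilityMeasure ν →
      ∀ x y : E, tvDist (P μ x) (P ν y) ≤ 2 * (1 - α))
    (B2 : ∀ (μ ν : Measure E), IsProbabilityMeasure μ → IsProbabilityMeasure ν →
      ∀ x : E, tvDist (P μ x) (P ν x) ≤ lam * tvDist μ ν) :
    ∃ π : Measure E, IsProbabilityMeasure π ∧ stepMeasure P π = π ∧
      (∀ π' : Measure E, IsProbabilityMeasure π' → stepMeasure P π' = π' → π' = π) ∧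
      (∀ μ0 : Measure E, IsProbabilityMeasure μ0 →
        (lam < α → ∀ n : ℕ,
          tvDist (marginal P μ0 n) π ≤ 2 * (1 - (α - lam)) ^ n) ∧
        (lam = α → ∀ n : ℕ, 1 ≤ n →
          tvDist (marginal P μ0 n) π ≤ 2 / (lam * n))) := by
  have h : ButkovskyConditions P α lam := ⟨B1, B2⟩
  obtain ⟨π, _, hπ, huniq⟩ := exists_unique_stepMeasure_eq h hα0 hlamα
  refine ⟨π, inferInstance, hπ, huniq, fun μ0 _ => ⟨fun _ n => ?_, fun hlam n hn => ?_⟩⟩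
  · simpa only [marginal_eq_self P hπ] using
      tvDist_marginal_le_geometric h hlam0 (by linarith) μ0 π n
  · have := nat_mul_tvDist_marginal_le h hα0.le hlamα μ0 π n
    rw [marginal_eq_self P hπ, ← hlam] at this
    rw [le_div_iff₀ (by subst hlam; positivity)]
    linarith
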